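/- arXiv:2010.04847 — 2 statements merged into one kernel-verified Lean document; each statement's English description precedes it below -/
import Mathlib

section
/- Let n ≥ 1, let Ψ : ℝⁿ → ℝ be twice continuously differentiable, and let p : (0,∞) × ℝⁿ → ℝ be differentiable in the time variable t for each x and twice continuously differentiable in the space variable x for each t, satisfying the Fokker–Planck equation ∂p(t,x) = (1/2) Δp(t,x) + div(y ↦ p(t,y) ∇Ψ(y))(x) for all (t,x) ∈ (0,∞) × ℝⁿ (Laplacian, gradient and divergence taken in the spatial variable). Then the likelihood ratio ℓ(t,x) := p(t,x) · exp(2 Ψ(x)) satisfies the backward Kolmogorov equation ∂ℓ(t,x) = (1/2) Δℓ(t,x) − ⟨∇ℓ(t,x), ∇Ψ(x)⟩ for all (t,x) ∈ (0,∞) × ℝⁿ. -/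
open Real InnerProductSpace

noncomputable section

/-- Laplacian of a scalar function on `ℝⁿ`: sum of second partial derivatives. -/
def lap {n : ℕ} (f : EuclideanSpace ℝ (Fin n) → ℝ) (x : EuclideanSpace ℝ (Fin n)) : ℝ :=
  ∑ i : Fin n,
    fderiv ℝ (fun y => fderiv ℝ f y (EuclideanSpace.single i (1 : ℝ))) x
      (EuclideanSpace.single i (1 : ℝ))

/-- Divergence of a vector field on `ℝⁿ`: sum of partial derivatives of the components. -/
def div' {n : ℕ} (v : EuclideanSpace ℝ (Fin n) → EuclideanSpace ℝ (Fin n))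
    (x : EuclideanSpace ℝ (Fin n)) : ℝ :=
  ∑ i : Fin n, fderiv ℝ (fun y => v y i) x (EuclideanSpace.single i (1 : ℝ))

/-! With `E = exp (2Ψ)` one has `∇E = 2E∇Ψ` and `ΔE = 2E(2‖∇Ψ‖² + ΔΨ)`. Expanding
`Δ(pE) = EΔp + 2⟪∇p, ∇E⟫ + pΔE` and `∇(pE) = E∇p + p∇E`, the right-hand side
`½Δ(pE) − ⟪∇(pE), ∇Ψ⟫` collapses to `E(½Δp + ⟪∇p, ∇Ψ⟫ + pΔΨ) = E(½Δp + div(p∇Ψ)) = E ∂p`.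
All these identities follow from `Δ = div ∘ ∇` and `div(f v) = ⟪∇f, v⟫ + f div v`. -/

section Gradient

variable {F : Type*} [NormedAddCommGroup F] [InnerProductSpace ℝ F] [CompleteSpace F]
  {f g : F → ℝ} {x : F}

theorem gradient_mul (hf : DifferentiableAt ℝ f x) (hg : DifferentiableAt ℝ g x) :
    gradient (fun y => f y * g y) x = g x • gradient f x + f x • gradient g x := by
  refine ext_inner_right ℝ fun v => ?_
  simp only [inner_gradient_left, inner_add_left, inner_smul_left, fderiv_fun_mul hf hg,
    add_apply, smul_apply, smul_eq_mul, conj_trivial]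
  ring

theorem gradient_const_mul (hg : DifferentiableAt ℝ g x) (c : ℝ) :
    gradient (fun y => c * g y) x = c • gradient g x := by
  refine ext_inner_right ℝ fun v => ?_
  simp [inner_gradient_left, inner_smul_left, fderiv_const_mul hg]

theorem gradient_exp_comp (hg : DifferentiableAt ℝ g x) :
    gradient (fun y => exp (g y)) x = exp (g x) • gradient g x := by
  refine ext_inner_right ℝ fun v => ?_
  simp [inner_gradient_left, inner_smul_left, fderiv_exp hg]

end Gradient

section Euclidean

variable {n : ℕ} {f g : EuclideanSpace ℝ (Fin n) → ℝ}
  {v w : EuclideanSpace ℝ (Fin n) → EuclideanSpace ℝ (Fin n)} {x : EuclideanSpace ℝ (Fin n)}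

theorem gradient_apply (f : EuclideanSpace ℝ (Fin n) → ℝ) (x : EuclideanSpace ℝ (Fin n))
    (i : Fin n) : gradient f x i = fderiv ℝ f x (EuclideanSpace.single i 1) := by
  rw [← inner_gradient_left, EuclideanSpace.inner_single_right]
  simp

theorem ContDiff.differentiable_gradient (hf : ContDiff ℝ 2 f) :
    Differentiable ℝ (gradient f) := by
  refine (differentiable_piLp 2).2 fun i => ?_
  simp only [gradient_apply]
  exact ((hf.fderiv_right (by norm_num)).clm_apply contDiff_const).differentiable one_ne_zero

theorem div'_gradient (f : EuclideanSpace ℝ (Fin n) → ℝ) : div' (gradient f) = lap f := by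
  ext x
  simp only [div', lap, gradient_apply]

theorem div'_add (hv : DifferentiableAt ℝ v x) (hw : DifferentiableAt ℝ w x) :
    div' (fun y => v y + w y) x = div' v x + div' w x := by
  simp only [div', ← Finset.sum_add_distrib, PiLp.add_apply]
  refine Finset.sum_congr rfl fun i _ => ?_
  rw [fderiv_fun_add ((differentiableAt_piLp 2).1 hv i) ((differentiableAt_piLp 2).1 hw i)]
  rfl

theorem div'_smul (hf : DifferentiableAt ℝ f x) (hv : DifferentiableAt ℝ v x) :
    div' (fun y => f y • v y) x = ⟪gradient f x, v x⟫_ℝ + f x * div' v x := by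
  simp only [div', PiLp.smul_apply, smul_eq_mul, Finset.mul_sum, PiLp.inner_apply, gradient_apply,
    ← Finset.sum_add_distrib]
  refine Finset.sum_congr rfl fun i _ => ?_
  rw [fderiv_fun_mul hf ((differentiableAt_piLp 2).1 hv i)]
  simp only [add_apply, smul_apply, smul_eq_mul,
    RCLike.inner_apply, conj_trivial]
  ring

theorem lap_mul (hf : ContDiff ℝ 2 f) (hg : ContDiff ℝ 2 g) (x : EuclideanSpace ℝ (Fin n)) :
    lap (fun y => f y * g y) x =
      g x * lap f x + 2 * ⟪gradient f x, gradient g x⟫_ℝ + f x * lap g x := by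
  have hf' := hf.differentiable two_ne_zero
  have hg' := hg.differentiable two_ne_zero
  have hf'' := hf.differentiable_gradient
  have hg'' := hg.differentiable_gradient
  have hgrad : gradient (fun y => f y * g y) = fun y => g y • gradient f y + f y • gradient g y :=
    funext fun y => gradient_mul (hf' y) (hg' y)
  rw [← div'_gradient, hgrad, div'_add ((hg' x).fun_smul (hf'' x)) ((hf' x).fun_smul (hg'' x)),
    div'_smul (hg' x) (hf'' x), div'_smul (hf' x) (hg'' x), div'_gradient, div'_gradient,
    real_inner_comm]
  ring

theorem gradient_exp_const_mul (hg : DifferentiableAt ℝ g x) (c : ℝ) :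
    gradient (fun y => exp (c * g y)) x = (c * exp (c * g x)) • gradient g x := by
  rw [gradient_exp_comp (hg.const_mul c), gradient_const_mul hg, smul_smul, mul_comm]

theorem lap_exp_const_mul (hg : ContDiff ℝ 2 g) (c : ℝ) (x : EuclideanSpace ℝ (Fin n)) :
    lap (fun y => exp (c * g y)) x = c * exp (c * g x) * (c * ‖gradient g x‖ ^ 2 + lap g x) := by
  have hg' := hg.differentiable two_ne_zero
  have hE : DifferentiableAt ℝ (fun y => exp (c * g y)) x := ((hg' x).const_mul c).exp
  rw [← div'_gradient, funext fun y => gradient_exp_const_mul (hg' y) c,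
    div'_smul (hE.const_mul c) (hg.differentiable_gradient x), gradient_const_mul hE,
    gradient_exp_const_mul (hg' x), div'_gradient, inner_smul_left, inner_smul_left,
    real_inner_self_eq_norm_sq]
  simp only [conj_trivial]
  ring

end Euclidean

theorem likelihood_ratio_satisfies_backward_kolmogorov_general
    (n : ℕ)
    (Ψ : EuclideanSpace ℝ (Fin n) → ℝ) (hΨ : ContDiff ℝ 2 Ψ)
    (p : ℝ → EuclideanSpace ℝ (Fin n) → ℝ)
    (hp_space : ∀ t : ℝ, 0 < t → ContDiff ℝ 2 (p t))
    (hFP : ∀ t : ℝ, 0 < t → ∀ x : EuclideanSpace ℝ (Fin n),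
      deriv (fun s => p s x) t =
        (1 / 2) * lap (p t) x + div' (fun y => p t y • gradient Ψ y) x) :
    ∀ t : ℝ, 0 < t → ∀ x : EuclideanSpace ℝ (Fin n),
      deriv (fun s => p s x * Real.exp (2 * Ψ x)) t =
        (1 / 2) * lap (fun y => p t y * Real.exp (2 * Ψ y)) x
          - ⟪gradient (fun y => p t y * Real.exp (2 * Ψ y)) x, gradient Ψ x⟫_ℝ := by
  intro t ht x
  have hp := hp_space t ht
  have hp' := hp.differentiable two_ne_zero x
  have hΨ' := hΨ.differentiable two_ne_zero x
  have hE : ContDiff ℝ 2 fun y => exp (2 * Ψ y) := (contDiff_const.mul hΨ).exp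
  rw [deriv_mul_const_field, hFP t ht x, div'_smul hp' (hΨ.differentiable_gradient x),
    div'_gradient, lap_mul hp hE, lap_exp_const_mul hΨ,
    gradient_mul hp' (hE.differentiable two_ne_zero x), gradient_exp_const_mul hΨ',
    inner_add_left, inner_smul_left, inner_smul_left, inner_smul_right, inner_smul_left,
    real_inner_self_eq_norm_sq]
  simp only [conj_trivial]
  ring

/-- If `p` satisfies the Fokker–Planck equation associated with the potential `Ψ`, then the
likelihood ratio `ℓ(t,x) = p(t,x) · exp(2Ψ(x))` satisfies the backward Kolmogorov equation
`∂ℓ = (1/2) Δℓ − ⟨∇ℓ, ∇Ψ⟩`. -/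
theorem likelihood_ratio_satisfies_backward_kolmogorov
    (n : ℕ) (hn : 1 ≤ n)
    (Ψ : EuclideanSpace ℝ (Fin n) → ℝ) (hΨ : ContDiff ℝ 2 Ψ)
    (p : ℝ → EuclideanSpace ℝ (Fin n) → ℝ)
    (hp_time : ∀ x : EuclideanSpace ℝ (Fin n), ∀ t : ℝ, 0 < t →
      DifferentiableAt ℝ (fun s => p s x) t)
    (hp_space : ∀ t : ℝ, 0 < t → ContDiff ℝ 2 (p t))
    (hFP : ∀ t : ℝ, 0 < t → ∀ x : EuclideanSpace ℝ (Fin n),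
      deriv (fun s => p s x) t =
        (1 / 2) * lap (p t) x + div' (fun y => p t y • gradient Ψ y) x) :
    ∀ t : ℝ, 0 < t → ∀ x : EuclideanSpace ℝ (Fin n),
      deriv (fun s => p s x * Real.exp (2 * Ψ x)) t =
        (1 / 2) * lap (fun y => p t y * Real.exp (2 * Ψ y)) x
          - ⟪gradient (fun y => p t y * Real.exp (2 * Ψ y)) x, gradient Ψ x⟫_ℝ :=
  likelihood_ratio_satisfies_backward_kolmogorov_general n Ψ hΨ p hp_space hFP

end
end

section
/- Let (Ω, 𝓕, μ) be a probability space and let (𝓗_t)_{t ≥ 0} be an antitone family of sub-σ-algebras of 𝓕 (i.e. 𝓗_s ⊇ 𝓗_t whenever s ≤ t) whose intersection 𝓗_∞ := ⋂_{t ≥ 0} 𝓗_t is μ-trivial, meaning μ(A) ∈ {0,1} for every A ∈ 𝓗_∞. Let θ : Ω → [0,∞) be measurable with θ and θ·log θ both μ-integrable, and set θ_t := E[θ | 𝓗_t]. With f(x) = x log x for x > 0 and f(0) = 0, the function t ↦ ∫ f(θ_t) dμ is nonincreasing on [0,∞) and converges, as t → ∞, to f(∫ θ dμ). In particular, if ∫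 θ dμ = 1, then ∫ θ_t log θ_t dμ decreases to 0 as t → ∞. -/
/-!
Conditional Jensen for the convex function `x ↦ x log x`, together with the tower property,
makes `t ↦ ∫ f(θ_t) dμ` nonincreasing. For the limit, `θ_n = E[θ | 𝓗_n]` is a backward
martingale. When `θ ∈ L²`, the `θ_n` are the orthogonal projections of `θ` onto a decreasing
sequence of closed subspaces of `L²`, so their squared norms decrease and, by Pythagoras, they
form a Cauchy sequence. Its limit is `𝓗_n`-measurable (up to null sets) for every `n`, hence
a.e. equal to a function measurable for the trivial tail σ-algebra, hence a.e. constant; the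
constant is `∫ θ dμ`. Simple functions are dense in `L¹` and conditional expectations are
`L¹`-contractions, so `θ_n → ∫ θ dμ` in `L¹` for every integrable `θ`. Then `f(θ_n) → f(∫ θ dμ)`
in measure, and `f(θ_n)` is uniformly integrable, being dominated by `E[|θ log θ| | 𝓗_n] + 1`;
Vitali's theorem gives convergence of the integrals along `ℕ`, and monotonicity along `t → ∞`.
-/

open MeasureTheory Filter Topology Set
open scoped ENNReal

theorem Submodule.cauchySeq_starProjection_of_antitone {𝕜 E : Type*} [RCLike 𝕜]
    [NormedAddCommGroup E] [InnerProductSpace 𝕜 E] {K : ℕ → Submodule 𝕜 E}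
    [∀ n, (K n).HasOrthogonalProjection] (hK : Antitone K) (x : E) :
    CauchySeq fun n => (K n).starProjection x := by
  set a : ℕ → ℝ := fun n => ‖(K n).starProjection x‖ ^ 2
  have hpyth : ∀ k n, k ≤ n →
      ‖(K k).starProjection x - (K n).starProjection x‖ ^ 2 = a k - a n := by
    intro k n hkn
    have h := norm_sq_eq_add_norm_sq_starProjection ((K k).starProjection x) (K n)
    rw [starProjection_orthogonal_val, ← ContinuousLinearMap.comp_apply,
      starProjection_comp_starProjection_of_le (hK hkn)] at h
    simp only [a]
    linarith
  have hdist : ∀ k n, k ≤ n → dist ((K k).starProjection x) ((K n).starProjection x) ^ 2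
      = |a k - a n| := by
    intro k n hkn
    rw [dist_eq_norm, hpyth k n hkn, abs_of_nonneg (by rw [← hpyth k n hkn]; positivity)]
  have ha : CauchySeq a := by
    have ha_anti : Antitone a := fun k n hkn => by
      have := hpyth k n hkn
      nlinarith [sq_nonneg ‖(K k).starProjection x - (K n).starProjection x‖]
    exact (tendsto_atTop_ciInf ha_anti ⟨0, by rintro _ ⟨n, rfl⟩; positivity⟩).cauchySeq
  rw [Metric.cauchySeq_iff] at ha ⊢
  intro ε hε
  obtain ⟨N, hN⟩ := ha (ε ^ 2) (by positivity)
  refine ⟨N, fun k hk n hn => ?_⟩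
  have hsq : dist ((K k).starProjection x) ((K n).starProjection x) ^ 2 < ε ^ 2 := by
    rcases le_total k n with hkn | hnk
    · rw [hdist k n hkn]; exact hN k hk n hn
    · rw [dist_comm, hdist n k hnk]; exact hN n hn k hk
  exact lt_of_pow_lt_pow_left₀ 2 hε.le hsq

theorem tendsto_atTop_of_antitoneOn_of_tendsto_natCast {f : ℝ → ℝ} {L : ℝ}
    (hf : AntitoneOn f (Ici 0)) (hL : Tendsto (fun n : ℕ => f n) atTop (𝓝 L)) :
    Tendsto f atTop (𝓝 L) := by
  rw [← tendsto_comp_val_Ici_atTop (a := 0)]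
  refine (tendsto_iff_tendsto_subseq_of_antitone (fun s t hst => hf s.2 t.2 hst)
    (φ := fun n : ℕ => (⟨n, mem_Ici.2 n.cast_nonneg⟩ : Ici (0 : ℝ))) ?_).2 hL
  exact tendsto_Ici_atTop.2 tendsto_natCast_atTop_atTop

namespace MeasureTheory

theorem TendstoInMeasure.comp_continuousAt {ι α E F : Type*} [MeasurableSpace α]
    [PseudoMetricSpace E] [PseudoMetricSpace F] {μ : Measure α} {l : Filter ι}
    {f : ι → α → E} {c : E} {φ : E → F}
    (hf : TendstoInMeasure μ f l fun _ => c) (hφ : ContinuousAt φ c) :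
    TendstoInMeasure μ (fun i x => φ (f i x)) l fun _ => φ c := by
  rw [tendstoInMeasure_iff_dist] at hf ⊢
  intro ε hε
  obtain ⟨δ, hδ, hφδ⟩ := Metric.continuousAt_iff.1 hφ ε hε
  refine tendsto_of_tendsto_of_tendsto_of_le_of_le tendsto_const_nhds (hf δ hδ)
    (fun _ => zero_le) fun i => measure_mono fun x hx => ?_
  by_contra h
  exact (not_le.2 (hφδ (not_le.1 h))) hx

theorem UnifIntegrable.mono {ι α β γ : Type*} [MeasurableSpace α]
    [NormedAddCommGroup β] [NormedAddCommGroup γ] {μ : Measure α} {p : ℝ≥0∞}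
    {f : ι → α → β} {g : ι → α → γ} (hg : UnifIntegrable g p μ)
    (hfg : ∀ i, ∀ᵐ x ∂μ, ‖f i x‖ ≤ ‖g i x‖) : UnifIntegrable f p μ := by
  intro ε hε
  obtain ⟨δ, hδ, hgδ⟩ := hg hε
  refine ⟨δ, hδ, fun i s hs hμs => (eLpNorm_mono_ae ?_).trans (hgδ i s hs hμs)⟩
  filter_upwards [hfg i] with x hx
  by_cases hxs : x ∈ s <;> simp [hxs, hx]

variable {Ω : Type*} {m0 : MeasurableSpace Ω} {μ : Measure Ω} [IsProbabilityMeasure μ]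
  {ℱ : ℕ → MeasurableSpace Ω}

theorem ae_mem_or_ae_notMem_of_forall_ae_eq_measurableSet (hℱ : ∀ n, ℱ n ≤ m0)
    (hanti : Antitone ℱ) (htail : ∀ s, MeasurableSet[⨅ n, ℱ n] s → μ s = 0 ∨ μ s = 1)
    {s : Set Ω} (hs : ∀ n, ∃ t, MeasurableSet[ℱ n] t ∧ t =ᵐ[μ] s) :
    (∀ᵐ x ∂μ, x ∈ s) ∨ ∀ᵐ x ∂μ, x ∉ s := by
  choose t ht_meas ht_eq using hs
  set L : Set Ω := limsup t atTop
  have hL_meas : MeasurableSet[⨅ n, ℱ n] L := by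
    refine MeasurableSpace.measurableSet_iInf.2 fun k => ?_
    rw [show L = limsup (fun n => t (n + k)) atTop from (limsup_nat_add t k).symm]
    exact @MeasurableSet.measurableSet_limsup _ (ℱ k) _ fun n =>
      hanti (Nat.le_add_left k n) _ (ht_meas (n + k))
  have hL : L =ᵐ[μ] s := limsup_ae_eq_of_forall_ae_eq t ht_eq
  rcases htail L hL_meas with h0 | h1
  · right
    filter_upwards [measure_eq_zero_iff_ae_notMem.1 h0, hL.mem_iff] with x hx hxs
    exact fun h => hx (hxs.2 h)
  · left
    have hm0 : MeasurableSet L := hℱ 0 _ (iInf_le ℱ 0 _ hL_meas)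
    filter_upwards [measure_eq_zero_iff_ae_notMem.1 ((prob_compl_eq_zero_iff hm0).2 h1),
      hL.mem_iff] with x hx hxs
    exact hxs.1 (not_notMem.1 hx)

theorem exists_ae_eq_const_of_forall_aestronglyMeasurable (hℱ : ∀ n, ℱ n ≤ m0)
    (hanti : Antitone ℱ) (htail : ∀ s, MeasurableSet[⨅ n, ℱ n] s → μ s = 0 ∨ μ s = 1)
    {f : Ω → ℝ} (hf : ∀ n, AEStronglyMeasurable[ℱ n] f μ) : ∃ c, f =ᵐ[μ] fun _ => c := by
  refine exists_eventuallyEq_const_of_forall_separating MeasurableSet fun U hU => ?_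
  refine ae_mem_or_ae_notMem_of_forall_ae_eq_measurableSet hℱ hanti htail fun n => ?_
  exact ⟨(hf n).mk f ⁻¹' U, (hf n).stronglyMeasurable_mk.measurable hU,
    (hf n).ae_eq_mk.symm.fun_comp (· ∈ U)⟩

theorem exists_tendsto_eLpNorm_condExp_sub_const_of_memLp_two (hℱ : ∀ n, ℱ n ≤ m0)
    (hanti : Antitone ℱ) (htail : ∀ s, MeasurableSet[⨅ n, ℱ n] s → μ s = 0 ∨ μ s = 1)
    {g : Ω → ℝ} (hg : MemLp g 2 μ) :
    ∃ c, Tendsto (fun n => eLpNorm (μ[g|ℱ n] - fun _ => c) 2 μ) atTop (𝓝 0) := by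
  have : ∀ n, Fact (ℱ n ≤ m0) := fun n => ⟨hℱ n⟩
  set K : ℕ → Submodule ℝ (Lp ℝ 2 μ) := fun n => lpMeas ℝ ℝ (ℱ n) 2 μ
  have hK : Antitone K := fun k n hkn f hf =>
    (mem_lpMeas_iff_aestronglyMeasurable.1 hf).mono (hanti hkn)
  obtain ⟨Y, hY⟩ := cauchySeq_tendsto_of_complete
    (Submodule.cauchySeq_starProjection_of_antitone hK (hg.toLp g))
  have hYmeas : ∀ k, AEStronglyMeasurable[ℱ k] (Y : Ω → ℝ) μ := fun k =>
    (isClosed_aestronglyMeasurable (hℱ k)).mem_of_tendsto hY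
      (eventually_atTop.2 ⟨k, fun n hn => hK hn ((K n).starProjection_apply_mem _)⟩)
  obtain ⟨c, hc⟩ := exists_ae_eq_const_of_forall_aestronglyMeasurable hℱ hanti htail hYmeas
  refine ⟨c, ((Lp.tendsto_Lp_iff_tendsto_eLpNorm' _ Y).1 hY).congr fun n => ?_⟩
  exact eLpNorm_congr_ae ((hg.condExpL2_ae_eq_condExp (𝕜 := ℝ) (hℱ n)).sub hc)

theorem tendsto_eLpNorm_condExp_sub_integral_of_memLp_two (hℱ : ∀ n, ℱ n ≤ m0)
    (hanti : Antitone ℱ) (htail : ∀ s, MeasurableSet[⨅ n, ℱ n] s → μ s = 0 ∨ μ s = 1)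
    {g : Ω → ℝ} (hg : MemLp g 2 μ) :
    Tendsto (fun n => eLpNorm (μ[g|ℱ n] - fun _ => ∫ x, g x ∂μ) 1 μ) atTop (𝓝 0) := by
  obtain ⟨c, hc2⟩ := exists_tendsto_eLpNorm_condExp_sub_const_of_memLp_two hℱ hanti htail hg
  have hc1 : Tendsto (fun n => eLpNorm (μ[g|ℱ n] - fun _ => c) 1 μ) atTop (𝓝 0) :=
    tendsto_of_tendsto_of_tendsto_of_le_of_le tendsto_const_nhds hc2 (fun _ => zero_le)
      fun n => eLpNorm_le_eLpNorm_of_exponent_le one_le_two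
        (integrable_condExp.sub (integrable_const c)).aestronglyMeasurable
  have hint : Tendsto (fun n => ∫ x, μ[g|ℱ n] x ∂μ) atTop (𝓝 c) := by
    simpa using tendsto_integral_of_L1' _ aestronglyMeasurable_const
      (Eventually.of_forall fun n => integrable_condExp) hc1
  simp_rw [integral_condExp (hℱ _)] at hint
  rwa [tendsto_nhds_unique tendsto_const_nhds hint]

theorem eLpNorm_const_integral_le (f : Ω → ℝ) :
    eLpNorm (fun _ => ∫ x, f x ∂μ) 1 μ ≤ eLpNorm f 1 μ := by
  rw [eLpNorm_const _ one_ne_zero (NeZero.ne μ), eLpNorm_one_eq_lintegral_enorm]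
  simpa using enorm_integral_le_lintegral_enorm f

theorem tendsto_eLpNorm_condExp_sub_integral (hℱ : ∀ n, ℱ n ≤ m0)
    (hanti : Antitone ℱ) (htail : ∀ s, MeasurableSet[⨅ n, ℱ n] s → μ s = 0 ∨ μ s = 1)
    {g : Ω → ℝ} (hg : Integrable g μ) :
    Tendsto (fun n => eLpNorm (μ[g|ℱ n] - fun _ => ∫ x, g x ∂μ) 1 μ) atTop (𝓝 0) := by
  refine ENNReal.tendsto_nhds_zero.2 fun ε hε => ?_
  have hε3 : 0 < ε / 3 := ENNReal.div_pos hε.ne' (by simp)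
  obtain ⟨s, hgs, -⟩ :=
    (memLp_one_iff_integrable.2 hg).exists_simpleFunc_eLpNorm_sub_lt ENNReal.one_ne_top hε3.ne'
  have hs : Integrable s μ := s.integrable_of_isFiniteMeasure
  filter_upwards [ENNReal.tendsto_nhds_zero.1 (tendsto_eLpNorm_condExp_sub_integral_of_memLp_two
    hℱ hanti htail (s.memLp_of_isFiniteMeasure 2 μ)) _ hε3] with n hn
  have hsplit : μ[g|ℱ n] - (fun _ => ∫ x, g x ∂μ) =ᵐ[μ] μ[g - ⇑s|ℱ n]
      + (μ[s|ℱ n] - fun _ => ∫ x, s x ∂μ) + fun _ => ∫ x, (⇑s - g) x ∂μ := by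
    filter_upwards [condExp_sub hg hs (ℱ n)] with x hx
    simp only [Pi.add_apply, Pi.sub_apply, hx, integral_sub hs hg]
    ring
  calc eLpNorm (μ[g|ℱ n] - fun _ => ∫ x, g x ∂μ) 1 μ
      ≤ eLpNorm (μ[g - ⇑s|ℱ n]) 1 μ + eLpNorm (μ[s|ℱ n] - fun _ => ∫ x, s x ∂μ) 1 μ
        + eLpNorm (fun _ => ∫ x, (⇑s - g) x ∂μ) 1 μ := by
        have h₁ : Integrable (μ[g - ⇑s|ℱ n]) μ := integrable_condExp
        have h₂ : Integrable (μ[s|ℱ n] - fun _ => ∫ x, s x ∂μ) μ :=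
          integrable_condExp.sub (integrable_const _)
        rw [eLpNorm_congr_ae hsplit]
        exact (eLpNorm_add_le (h₁.add h₂).aestronglyMeasurable aestronglyMeasurable_const
          le_rfl).trans (add_le_add_left (eLpNorm_add_le h₁.aestronglyMeasurable
            h₂.aestronglyMeasurable le_rfl) _)
    _ ≤ ε / 3 + ε / 3 + ε / 3 := by
        gcongr
        · exact (eLpNorm_condExp_le_eLpNorm _ le_rfl).trans hgs.le
        · rw [← eLpNorm_neg, neg_sub] at hgs
          exact (eLpNorm_const_integral_le _).trans hgs.le
    _ = ε := ENNReal.add_thirds ε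

end MeasureTheory

namespace ConvexOn

variable {Ω : Type*} {m0 : MeasurableSpace Ω} {μ : Measure Ω}
  {φ : ℝ → ℝ} {θ : Ω → ℝ} {m : MeasurableSpace Ω}

theorem abs_comp_condExp_le [IsFiniteMeasure μ] (hφ : ConvexOn ℝ (Ici 0) φ)
    (hφc : Continuous φ) {C : ℝ} (hC : ∀ x, 0 ≤ x → C ≤ φ x) (hm : m ≤ m0)
    (hθ0 : 0 ≤ᵐ[μ] θ) (hθ : Integrable θ μ) (hφθ : Integrable (fun x => φ (θ x)) μ) :
    ∀ᵐ x ∂μ, |φ (μ[θ|m] x)| ≤ μ[(fun x => |φ (θ x)|)|m] x + |C| := by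
  have hjensen : ∀ᵐ x ∂μ, φ (μ[θ|m] x) ≤ μ[fun x => φ (θ x)|m] x :=
    hφ.map_condExp_le hm (hφc.lowerSemicontinuous.lowerSemicontinuousOn _) hθ0 isClosed_Ici hθ
      hφθ
  have habs : ∀ᵐ x ∂μ, μ[fun x => φ (θ x)|m] x ≤ μ[(fun x => |φ (θ x)|)|m] x :=
    condExp_mono hφθ hφθ.abs (Eventually.of_forall fun x => le_abs_self _)
  have hnonneg : ∀ᵐ x ∂μ, 0 ≤ μ[(fun x => |φ (θ x)|)|m] x :=
    condExp_nonneg (Eventually.of_forall fun x => abs_nonneg (φ (θ x)))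
  have hθm : ∀ᵐ x ∂μ, 0 ≤ μ[θ|m] x := condExp_nonneg hθ0
  filter_upwards [hjensen, habs, hnonneg, hθm] with x hj ha hn hx
  have := hC _ hx
  rw [abs_le]
  constructor
  · linarith [neg_abs_le C, hn]
  · linarith [abs_nonneg C, hj.trans ha]

theorem integrable_comp_condExp [IsFiniteMeasure μ] (hφ : ConvexOn ℝ (Ici 0) φ)
    (hφc : Continuous φ) (hφb : BddBelow (φ '' Ici 0)) (hm : m ≤ m0) (hθ0 : 0 ≤ᵐ[μ] θ)
    (hθ : Integrable θ μ) (hφθ : Integrable (fun x => φ (θ x)) μ) :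
    Integrable (fun x => φ (μ[θ|m] x)) μ := by
  obtain ⟨C, hC⟩ := hφb
  refine Integrable.mono'
    ((integrable_condExp (m := m) (f := fun x => |φ (θ x)|)).add (integrable_const |C|))
    (hφc.comp_aestronglyMeasurable (stronglyMeasurable_condExp.mono hm).aestronglyMeasurable) ?_
  simpa only [Real.norm_eq_abs, Pi.add_apply] using
    hφ.abs_comp_condExp_le hφc (fun x hx => hC ⟨x, hx, rfl⟩) hm hθ0 hθ hφθ

theorem integral_comp_condExp_le [IsFiniteMeasure μ] (hφ : ConvexOn ℝ (Ici 0) φ)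
    (hφc : Continuous φ) (hφb : BddBelow (φ '' Ici 0)) (hm : m ≤ m0) (hθ0 : 0 ≤ᵐ[μ] θ)
    (hθ : Integrable θ μ) (hφθ : Integrable (fun x => φ (θ x)) μ) :
    ∫ x, φ (μ[θ|m] x) ∂μ ≤ ∫ x, φ (θ x) ∂μ :=
  (integral_mono_ae (hφ.integrable_comp_condExp hφc hφb hm hθ0 hθ hφθ) integrable_condExp
    (hφ.map_condExp_le hm (hφc.lowerSemicontinuous.lowerSemicontinuousOn _) hθ0 isClosed_Ici hθ
      hφθ)).trans_eq (integral_condExp hm)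

theorem integral_comp_condExp_mono [IsFiniteMeasure μ] (hφ : ConvexOn ℝ (Ici 0) φ)
    (hφc : Continuous φ) (hφb : BddBelow (φ '' Ici 0)) {m₁ m₂ : MeasurableSpace Ω}
    (hm₁ : m₁ ≤ m0) (hm₂₁ : m₂ ≤ m₁) (hθ0 : 0 ≤ᵐ[μ] θ) (hθ : Integrable θ μ)
    (hφθ : Integrable (fun x => φ (θ x)) μ) :
    ∫ x, φ (μ[θ|m₂] x) ∂μ ≤ ∫ x, φ (μ[θ|m₁] x) ∂μ := by
  have htower : μ[μ[θ|m₁]|m₂] =ᵐ[μ] μ[θ|m₂] := condExp_condExp_of_le hm₂₁ hm₁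
  calc ∫ x, φ (μ[θ|m₂] x) ∂μ = ∫ x, φ (μ[μ[θ|m₁]|m₂] x) ∂μ :=
        integral_congr_ae (htower.mono fun x hx => congrArg φ hx.symm)
    _ ≤ ∫ x, φ (μ[θ|m₁] x) ∂μ :=
        hφ.integral_comp_condExp_le hφc hφb (hm₂₁.trans hm₁) (condExp_nonneg hθ0)
          integrable_condExp (hφ.integrable_comp_condExp hφc hφb hm₁ hθ0 hθ hφθ)

theorem tendsto_integral_comp_condExp [IsProbabilityMeasure μ] (hφ : ConvexOn ℝ (Ici 0) φ)
    (hφc : Continuous φ) (hφb : BddBelow (φ '' Ici 0)) {ℱ : ℕ → MeasurableSpace Ω}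
    (hℱ : ∀ n, ℱ n ≤ m0) (hθ0 : 0 ≤ᵐ[μ] θ) (hθ : Integrable θ μ)
    (hφθ : Integrable (fun x => φ (θ x)) μ) {c : ℝ}
    (hconv : TendstoInMeasure μ (fun n => μ[θ|ℱ n]) atTop fun _ => c) :
    Tendsto (fun n => ∫ x, φ (μ[θ|ℱ n] x) ∂μ) atTop (𝓝 (φ c)) := by
  obtain ⟨C, hC⟩ := hφb
  have hdom : UnifIntegrable (fun n => μ[(fun x => |φ (θ x)|)|ℱ n] + fun _ => |C|) 1 μ :=
    (hφθ.abs.uniformIntegrable_condExp hℱ).unifIntegrable.add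
      (unifIntegrable_const le_rfl ENNReal.one_ne_top (memLp_const |C|)) le_rfl
      (fun n => integrable_condExp.aestronglyMeasurable) fun _ => aestronglyMeasurable_const
  have hui : UnifIntegrable (fun n x => φ (μ[θ|ℱ n] x)) 1 μ := by
    refine hdom.mono fun n => ?_
    filter_upwards [hφ.abs_comp_condExp_le hφc (fun x hx => hC ⟨x, hx, rfl⟩) (hℱ n) hθ0 hθ hφθ]
      with x hx
    simpa [Real.norm_eq_abs] using hx.trans (le_abs_self _)
  have hL1 := tendsto_Lp_finite_of_tendstoInMeasure le_rfl ENNReal.one_ne_top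
    (fun n => hφc.comp_aestronglyMeasurable
      (stronglyMeasurable_condExp.mono (hℱ n)).aestronglyMeasurable)
    (memLp_const (φ c)) hui (hconv.comp_continuousAt hφc.continuousAt)
  simpa using tendsto_integral_of_L1' _ aestronglyMeasurable_const
    (Eventually.of_forall fun n => hφ.integrable_comp_condExp hφc ⟨C, hC⟩ (hℱ n) hθ0 hθ hφθ) hL1

end ConvexOn

theorem integral_xlogx_condexp_antitone_tendsto_general
    {Ω : Type*} [F : MeasurableSpace Ω] (μ : Measure Ω) [IsProbabilityMeasure μ]
    (θ : Ω → ℝ) (hθ_nonneg : ∀ ω, 0 ≤ θ ω)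
    (hθ_int : Integrable θ μ)
    (hθlog_int : Integrable (fun ω => θ ω * Real.log (θ ω)) μ)
    (H : ℝ → MeasurableSpace Ω) (hHF : ∀ t : ℝ, H t ≤ F)
    (hH_anti : ∀ s t : ℝ, 0 ≤ s → s ≤ t → H t ≤ H s)
    (hH_tail_trivial : ∀ A : Set Ω,
      (∀ t : ℝ, 0 ≤ t → MeasurableSet[H t] A) → μ A = 0 ∨ μ A = 1) :
    (∀ s t : ℝ, 0 ≤ s → s ≤ t →
      (∫ ω, (μ[θ|H t]) ω * Real.log ((μ[θ|H t]) ω) ∂μ)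
        ≤ ∫ ω, (μ[θ|H s]) ω * Real.log ((μ[θ|H s]) ω) ∂μ) ∧
    Tendsto (fun t : ℝ => ∫ ω, (μ[θ|H t]) ω * Real.log ((μ[θ|H t]) ω) ∂μ)
      atTop (nhds ((∫ ω, θ ω ∂μ) * Real.log (∫ ω, θ ω ∂μ))) ∧
    ((∫ ω, θ ω ∂μ) = 1 →
      Tendsto (fun t : ℝ => ∫ ω, (μ[θ|H t]) ω * Real.log ((μ[θ|H t]) ω) ∂μ)
        atTop (nhds 0)) := by
  have hφ := Real.convexOn_mul_log
  have hφc := Real.continuous_mul_log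
  have hφb : BddBelow ((fun x : ℝ => x * Real.log x) '' Ici 0) :=
    ⟨-1, by
      rintro _ ⟨x, hx, rfl⟩
      linarith [Real.self_sub_one_le_mul_log (mem_Ici.1 hx), mem_Ici.1 hx]⟩
  have hθ0 : 0 ≤ᵐ[μ] θ := Eventually.of_forall hθ_nonneg
  have hanti : Antitone fun n : ℕ => H n := fun k n hkn =>
    hH_anti k n k.cast_nonneg (Nat.cast_le.2 hkn)
  have htail : ∀ A, MeasurableSet[⨅ n : ℕ, H n] A → μ A = 0 ∨ μ A = 1 := fun A hA =>
    hH_tail_trivial A fun t ht => hH_anti t ⌈t⌉₊ ht (Nat.le_ceil t) A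
      (MeasurableSpace.measurableSet_iInf.1 hA ⌈t⌉₊)
  have hmono : ∀ s t : ℝ, 0 ≤ s → s ≤ t →
      (∫ ω, (μ[θ|H t]) ω * Real.log ((μ[θ|H t]) ω) ∂μ)
        ≤ ∫ ω, (μ[θ|H s]) ω * Real.log ((μ[θ|H s]) ω) ∂μ := fun s t hs hst =>
    hφ.integral_comp_condExp_mono hφc hφb (hHF s) (hH_anti s t hs hst) hθ0 hθ_int hθlog_int
  have hL1 := tendsto_eLpNorm_condExp_sub_integral (fun n => hHF n) hanti htail hθ_int
  have hlim := tendsto_atTop_of_antitoneOn_of_tendsto_natCast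
    (fun s hs t _ hst => hmono s t hs hst)
    (hφ.tendsto_integral_comp_condExp hφc hφb (fun n => hHF n) hθ0 hθ_int hθlog_int
      (tendstoInMeasure_of_tendsto_eLpNorm one_ne_zero
        (fun n => integrable_condExp.aestronglyMeasurable) aestronglyMeasurable_const hL1))
  exact ⟨hmono, hlim, fun h => by simpa [h] using hlim⟩

/-- Backwards-martingale entropy decrease: if `(𝓗_t)_{t ≥ 0}` is an antitone family of
sub-σ-algebras whose intersection is `μ`-trivial, and `θ ≥ 0` has `θ` and `θ log θ`
integrable, then with `θ_t = E[θ | 𝓗_t]` and `f(x) = x log x`, the function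
`t ↦ ∫ f(θ_t) dμ` is nonincreasing on `[0,∞)` and converges to `f(∫ θ dμ)` as `t → ∞`;
in particular it decreases to `0` when `∫ θ dμ = 1`. -/
theorem integral_xlogx_condexp_antitone_tendsto
    {Ω : Type*} [F : MeasurableSpace Ω] (μ : Measure Ω) [IsProbabilityMeasure μ]
    (θ : Ω → ℝ) (hθ_meas : Measurable θ) (hθ_nonneg : ∀ ω, 0 ≤ θ ω)
    (hθ_int : Integrable θ μ)
    (hθlog_int : Integrable (fun ω => θ ω * Real.log (θ ω)) μ)
    (H : ℝ → MeasurableSpace Ω) (hHF : ∀ t : ℝ, H t ≤ F)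
    (hH_anti : ∀ s t : ℝ, 0 ≤ s → s ≤ t → H t ≤ H s)
    (hH_tail_trivial : ∀ A : Set Ω,
      (∀ t : ℝ, 0 ≤ t → MeasurableSet[H t] A) → μ A = 0 ∨ μ A = 1) :
    (∀ s t : ℝ, 0 ≤ s → s ≤ t →
      (∫ ω, (μ[θ|H t]) ω * Real.log ((μ[θ|H t]) ω) ∂μ)
        ≤ ∫ ω, (μ[θ|H s]) ω * Real.log ((μ[θ|H s]) ω) ∂μ) ∧
    Tendsto (fun t : ℝ => ∫ ω, (μ[θ|H t]) ω * Real.log ((μ[θ|H t]) ω) ∂μ)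
      atTop (nhds ((∫ ω, θ ω ∂μ) * Real.log (∫ ω, θ ω ∂μ))) ∧
    ((∫ ω, θ ω ∂μ) = 1 →
      Tendsto (fun t : ℝ => ∫ ω, (μ[θ|H t]) ω * Real.log ((μ[θ|H t]) ω) ∂μ)
        atTop (nhds 0)) :=
  integral_xlogx_condexp_antitone_tendsto_general (F := F) μ θ hθ_nonneg hθ_int hθlog_int H hHF
    hH_anti hH_tail_trivial
end
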